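/- Let T = cS, where c ∈ (Σ ∪ Π)∖{$} and S is a p-string of length n ≥ 1 ending with $, with $ occurring nowhere else in S. For 1 ≤ p < q ≤ n, lcp∞(⟨T_p⟩, ⟨T_q⟩) = lcp∞(⟨S_p⟩, ⟨S_q⟩). -/

import Mathlib

/-! Common framework: parameterized strings over static alphabet `σ` and
parameter alphabet `π`.  A p-string is a `List (σ ⊕ π)`. -/

variable {σ π : Type*}

instance instInhabSum [Inhabited σ] : Inhabited (σ ⊕ π) := ⟨Sum.inl default⟩

/-- one right rotation: the last character moves to the front -/
def rotR1 {α : Type*} (W : List α) : List α := W.rotate (W.length - 1)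

/-- `rotR W i` is the `i`-th right rotation `Rot(W, i)` -/
def rotR {α : Type*} (W : List α) : ℕ → List α
  | 0 => W
  | i + 1 => rotR1 (rotR W i)

/-- 1-based access `W[i]` (junk default outside the range) -/
def get1 {α : Type*} [Inhabited α] (W : List α) (i : ℕ) : α := W.getD (i - 1) default

/-- the prev-encoding `⟨T⟩`, a list over `σ ⊕ ℕ∞` -/
def prevEnc [DecidableEq σ] [DecidableEq π] (T : List (σ ⊕ π)) : List (σ ⊕ ℕ∞) :=
  (List.range T.length).map fun k =>
    match T[k]? with
    | none => Sum.inr ⊤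
    | some (Sum.inl a) => Sum.inl a
    | some (Sum.inr b) =>
      match ((List.range k).filter fun j => T[j]? = some (Sum.inr b)).max? with
      | none => Sum.inr ⊤
      | some j => Sum.inr ((k - j : ℕ) : ℕ∞)

/-- number of distinct parameter characters occurring in `W` -/
def distinctParams [DecidableEq π] (W : List (σ ⊕ π)) : ℕ :=
  (W.filterMap Sum.getRight?).dedup.length

/-- the encoding `⟦T⟧`, a list over `σ ⊕ ℕ`:  a static character is kept; a
parameter character at (1-based) position `i` is replaced by the number of
distinct parameter characters in `Rot(T, n-i)[1:ℓ]` where `ℓ` is the leftmost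
occurrence position of `T[i]` in `Rot(T, n-i)`. -/
def encodeE [DecidableEq σ] [DecidableEq π] (T : List (σ ⊕ π)) : List (σ ⊕ ℕ) :=
  (List.range T.length).map fun k =>
    match T[k]? with
    | none => Sum.inr 0
    | some (Sum.inl a) => Sum.inl a
    | some (Sum.inr b) =>
      let R := rotR T (T.length - (k + 1))
      Sum.inr (distinctParams (R.take (R.idxOf (Sum.inr b) + 1)))

/-- order on prev-encoding characters: every static character is smaller than
every element of `ℕ∞` (and `ℕ∞` carries its usual order with `∞` on top) -/
def pvlt [LT σ] : (σ ⊕ ℕ∞) → (σ ⊕ ℕ∞) → Prop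
  | Sum.inl a, Sum.inl b => a < b
  | Sum.inl _, Sum.inr _ => True
  | Sum.inr _, Sum.inl _ => False
  | Sum.inr x, Sum.inr y => x < y

/-- `T` is a p-string of length ≥ 1 ending with the static character `d`,
which occurs nowhere else in `T`. -/
def EndsWith [DecidableEq σ] [DecidableEq π] (T : List (σ ⊕ π)) (d : σ) : Prop :=
  1 ≤ T.length ∧ T.getLast? = some (Sum.inl d) ∧ T.count (Sum.inl d) = 1

/-- `RA` represents the parameterized rotation array `RA_T` (0-based indices:
`RA_T[i] = (RA ⟨i-1⟩).val + 1`): the prev-encodings of the rotations are listed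
in strictly increasing lexicographic order. -/
def IsRA [LinearOrder σ] [DecidableEq π] (T : List (σ ⊕ π))
    (RA : Fin T.length ≃ Fin T.length) : Prop :=
  ∀ i j : Fin T.length, i < j →
    List.Lex pvlt (prevEnc (rotR T ((RA i).val + 1))) (prevEnc (rotR T ((RA j).val + 1)))

/-- `LF` represents the LF mapping: `LF_T(i) = j` iff `T_{RA_T[i]+1} = T_{RA_T[j]}`. -/
def IsLF [LinearOrder σ] [DecidableEq π] (T : List (σ ⊕ π))
    (RA LF : Fin T.length ≃ Fin T.length) : Prop :=
  ∀ i : Fin T.length, rotR T ((RA i).val + 2) = rotR T ((RA (LF i)).val + 1)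

/-- the pBWT array `L_T[i] = ⟦T_{RA_T[i]}⟧[n]` -/
def Larr [LinearOrder σ] [DecidableEq π] [Inhabited σ] (T : List (σ ⊕ π))
    (RA : Fin T.length ≃ Fin T.length) (i : Fin T.length) : σ ⊕ ℕ :=
  get1 (encodeE (rotR T ((RA i).val + 1))) T.length

/-- the array `F_T[i] = ⟦T_{RA_T[i]}⟧[1]` -/
def Farr [LinearOrder σ] [DecidableEq π] [Inhabited σ] (T : List (σ ⊕ π))
    (RA : Fin T.length ≃ Fin T.length) (i : Fin T.length) : σ ⊕ ℕ :=
  get1 (encodeE (rotR T ((RA i).val + 1))) 1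

/-- longest common prefix of two lists -/
def lcp {α : Type*} [DecidableEq α] : List α → List α → List α
  | a :: as, b :: bs => if a = b then a :: lcp as bs else []
  | _, _ => []

/-- `lcp∞(X, Y)`: the number of `∞`'s in the longest common prefix of `X` and `Y` -/
def lcpInf [DecidableEq σ] (X Y : List (σ ⊕ ℕ∞)) : ℕ :=
  (lcp X Y).count (Sum.inr ⊤)

/-- the `∞`-LCP array (1-based): `LCP∞_T[i] = lcp∞(⟨T_{RA_T[i]}⟩, ⟨T_{RA_T[i+1]}⟩)`
for `1 ≤ i < n`, and `0` otherwise. -/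
def LCPa [LinearOrder σ] [DecidableEq π] (T : List (σ ⊕ π))
    (RA : Fin T.length ≃ Fin T.length) (i : ℕ) : ℕ :=
  if h : 1 ≤ i ∧ i < T.length then
    lcpInf (prevEnc (rotR T ((RA ⟨i - 1, by omega⟩).val + 1)))
           (prevEnc (rotR T ((RA ⟨i, h.2⟩).val + 1)))
  else 0

/-- parameterized match: a bijection on `σ ⊕ π` fixing all static characters
renames `S` into `T` -/
def PMatch (S T : List (σ ⊕ π)) : Prop :=
  ∃ f : (σ ⊕ π) ≃ (σ ⊕ π), (∀ a : σ, f (Sum.inl a) = Sum.inl a) ∧ S.map f = T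

/-- leftmost (1-based) occurrence position of `c` in `W`, `0` if absent -/
def leftPos [DecidableEq σ] [DecidableEq π] (W : List (σ ⊕ π)) (c : σ ⊕ π) : ℕ :=
  if W.contains c then W.idxOf c + 1 else 0

/-- rightmost (1-based) occurrence position of `c` in `W`, `0` if absent -/
def rightPos [DecidableEq σ] [DecidableEq π] (W : List (σ ⊕ π)) (c : σ ⊕ π) : ℕ :=
  if W.contains c then W.length - W.reverse.idxOf c else 0


/-!
Write `n = |S|` and `T = c :: S`. For `p ≤ n`, both `T_p` and `S_p` start with the last `p`
characters of `S`; so `T_p, S_p` agree on their first `p` characters, and so do `T_q, S_q` when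
`p < q`. Prev-encodings commute with taking prefixes, so the same holds for `⟨T_p⟩, ⟨S_p⟩` and
`⟨T_q⟩, ⟨S_q⟩`. At position `p` the encoding `⟨S_p⟩` has the unique `$` of `S`, while `⟨S_q⟩`
has the encoding of another character of `S`. Hence both longest common prefixes are shorter
than `p` and they coincide.
-/

/-- `List.count` on `σ ⊕ π` goes through the derived `BEq` of `Sum`, which the library does not
know to be lawful. -/
instance instLawfulBEqSum {α β : Type*} [BEq α] [LawfulBEq α] [BEq β] [LawfulBEq β] :
    LawfulBEq (α ⊕ β) where
  rfl {x} := by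
    cases x with
    | inl a => exact beq_self_eq_true a
    | inr b => exact beq_self_eq_true b
  eq_of_beq {x y} h := by
    cases x <;> cases y <;> first
      | exact congrArg _ (eq_of_beq h)
      | exact absurd h Bool.false_ne_true

section Lcp

variable {α : Type*} [DecidableEq α]

theorem lcp_take (X Y : List α) (m : ℕ) :
    lcp (X.take m) (Y.take m) = (lcp X Y).take m := by
  induction X generalizing Y m with
  | nil => cases Y <;> simp [lcp]
  | cons a X ih =>
    cases Y <;> cases m <;> simp only [List.take_zero, List.take_nil, List.take_succ_cons, lcp]
    split_ifs <;> simp [ih]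

theorem length_lcp_le_of_getElem?_ne {X Y : List α} {k : ℕ} (h : X[k]? ≠ Y[k]?) :
    (lcp X Y).length ≤ k := by
  induction X generalizing Y k with
  | nil => cases Y <;> simp [lcp]
  | cons a X ih =>
    cases Y <;> cases k <;> simp only [lcp]
    all_goals try split_ifs
    all_goals simp_all

theorem lcp_eq_lcp_of_take_eq {X Y X' Y' : List α} {k m : ℕ} (hkm : k < m)
    (hX : X.take m = X'.take m) (hY : Y.take m = Y'.take m) (hne : X'[k]? ≠ Y'[k]?) :
    lcp X Y = lcp X' Y' := by
  have hne₀ : X[k]? ≠ Y[k]? := by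
    rwa [← List.getElem?_take_of_lt hkm, ← List.getElem?_take_of_lt (l := Y) hkm, hX, hY,
      List.getElem?_take_of_lt hkm, List.getElem?_take_of_lt hkm]
  calc lcp X Y = (lcp X Y).take m :=
        (List.take_of_length_le (by grind [length_lcp_le_of_getElem?_ne hne₀])).symm
    _ = (lcp X' Y').take m := by rw [← lcp_take, hX, hY, lcp_take]
    _ = lcp X' Y' := List.take_of_length_le (by grind [length_lcp_le_of_getElem?_ne hne])

end Lcp

section Rotation

variable {α : Type*}

theorem rotR_eq_rotate (W : List α) (i : ℕ) : rotR W i = W.rotate (i * (W.length - 1)) := by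
  induction i with
  | zero => simp [rotR]
  | succ i ih => rw [rotR, rotR1, ih, List.rotate_rotate, List.length_rotate, add_one_mul]

theorem rotR_eq_drop_append_take {W : List α} {p : ℕ} (hp : p ≤ W.length) :
    rotR W p = W.drop (W.length - p) ++ W.take (W.length - p) := by
  have hmod : p * (W.length - 1) ≡ W.length - p [MOD W.length] := by
    refine Nat.ModEq.add_right_cancel' p ?_
    have hsum : p * (W.length - 1) + p = p * W.length := by
      cases h : W.length <;> simp_all [Nat.mul_add_one]
    rw [hsum, Nat.sub_add_cancel hp]
    exact (Nat.mul_mod_left _ _).trans (Nat.mod_self _).symm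
  rw [rotR_eq_rotate, ← List.rotate_mod, hmod, List.rotate_mod,
    List.rotate_eq_drop_append_take (Nat.sub_le _ _)]

theorem getElem?_rotR {W : List α} {p k : ℕ} (hp : p ≤ W.length) (hk : k < p) :
    (rotR W p)[k]? = W[W.length - p + k]? := by
  rw [rotR_eq_drop_append_take hp, List.getElem?_append_left (by simp; omega),
    List.getElem?_drop]

theorem take_rotR_cons {S : List α} {m p : ℕ} (c : α) (hm : m ≤ p) (hp : p ≤ S.length) :
    (rotR (c :: S) p).take m = (rotR S p).take m := by
  have hp' : (c :: S).length - p = S.length - p + 1 := by simp; omega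
  rw [rotR_eq_drop_append_take hp, rotR_eq_drop_append_take (by simp; omega), hp',
    List.drop_succ_cons, List.take_append_of_le_length (by simp; omega),
    List.take_append_of_le_length (by simp; omega)]

end Rotation

section PrevEnc

variable [DecidableEq σ] [DecidableEq π]

theorem prevEnc_take (T : List (σ ⊕ π)) (m : ℕ) : (prevEnc T).take m = prevEnc (T.take m) := by
  apply List.ext_getElem?
  intro k
  by_cases hk : k < m
  · have hpre : ∀ j ≤ k, (T.take m)[j]? = T[j]? := fun j hj =>
      List.getElem?_take_of_lt (by omega)
    by_cases hkT : k < T.length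
    · simp only [List.getElem?_take_of_lt hk, prevEnc, List.getElem?_map, List.length_take,
        List.getElem?_range hkT, List.getElem?_range (show k < min m T.length by omega),
        Option.map_some]
      have hfil : ∀ b : π, (List.range k).filter (fun j => (T.take m)[j]? = some (Sum.inr b))
          = (List.range k).filter (fun j => T[j]? = some (Sum.inr b)) := fun b =>
        List.filter_congr fun j hj => by rw [hpre j (List.mem_range.mp hj).le]
      simp only [hfil]
    · simp [prevEnc, List.getElem?_take, hk, hkT]
  · simp [prevEnc, List.getElem?_take, hk]

theorem prevEnc_getElem?_eq_inl_iff {T : List (σ ⊕ π)} {k : ℕ} {a : σ} :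
    (prevEnc T)[k]? = some (Sum.inl a) ↔ T[k]? = some (Sum.inl a) := by
  simp only [prevEnc, List.getElem?_map]
  by_cases hkT : k < T.length
  · simp only [List.getElem?_range hkT, Option.map_some, Option.some.injEq]
    rcases T[k]? with _ | b | b
    · simp only [reduceCtorEq]
    · simp only [Sum.inl.injEq, Option.some.injEq]
    · simp only [Option.some.injEq, reduceCtorEq, iff_false]
      split <;> simp
  · simp [hkT]

end PrevEnc

section EndsWith

variable [DecidableEq σ] [DecidableEq π]

theorem EndsWith.getElem?_length_sub_one {S : List (σ ⊕ π)} {d : σ} (hS : EndsWith S d) :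
    S[S.length - 1]? = some (Sum.inl d) := by
  rw [← List.getLast?_eq_getElem?]
  exact hS.2.1

theorem EndsWith.getElem?_ne {S : List (σ ⊕ π)} {d : σ} (hS : EndsWith S d) {j : ℕ}
    (hj : j < S.length - 1) : S[j]? ≠ some (Sum.inl d) := by
  obtain ⟨-, hlast, hcount⟩ := hS
  have hsplit := List.dropLast_append_getLast? _ hlast
  have hnot : Sum.inl d ∉ S.dropLast := by
    rw [← hsplit, List.count_append, List.count_singleton_self] at hcount
    exact List.count_eq_zero.mp (by omega)
  intro hjd
  refine hnot (List.mem_of_getElem? (i := j) ?_)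
  rw [List.getElem?_dropLast, if_pos hj, hjd]

end EndsWith

theorem lcpInf_cons_general [LinearOrder σ] [DecidableEq π]
    (d : σ)
    (S : List (σ ⊕ π)) (hS : EndsWith S d)
    (c : σ ⊕ π)
    (p q : ℕ) (h1 : 1 ≤ p) (h2 : p < q) (h3 : q ≤ S.length) :
    lcpInf (prevEnc (rotR (c :: S) p)) (prevEnc (rotR (c :: S) q))
      = lcpInf (prevEnc (rotR S p)) (prevEnc (rotR S q)) := by
  have hdollar : (rotR S p)[p - 1]? = some (Sum.inl d) := by
    rw [getElem?_rotR (by omega) (by omega), ← hS.getElem?_length_sub_one]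
    congr 1
    omega
  have hne : (prevEnc (rotR S p))[p - 1]? ≠ (prevEnc (rotR S q))[p - 1]? := by
    rw [prevEnc_getElem?_eq_inl_iff.mpr hdollar, ne_comm, Ne, prevEnc_getElem?_eq_inl_iff,
      getElem?_rotR h3 (by omega)]
    exact hS.getElem?_ne (by omega)
  unfold lcpInf
  rw [lcp_eq_lcp_of_take_eq (Nat.sub_one_lt_of_lt h1) ?_ ?_ hne]
  · rw [prevEnc_take, prevEnc_take, take_rotR_cons c le_rfl (by omega)]
  · rw [prevEnc_take, prevEnc_take, take_rotR_cons c h2.le h3]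

/-- Let `T = cS` with `c ∈ (Σ ∪ Π) ∖ {$}`.  For `1 ≤ p < q ≤ n`,
`lcp∞(⟨T_p⟩, ⟨T_q⟩) = lcp∞(⟨S_p⟩, ⟨S_q⟩)`. -/
theorem lcpInf_cons [LinearOrder σ] [DecidableEq π]
    (d : σ) (hd : ∀ a : σ, d ≤ a)
    (S : List (σ ⊕ π)) (hS : EndsWith S d)
    (c : σ ⊕ π) (hc : c ≠ Sum.inl d)
    (p q : ℕ) (h1 : 1 ≤ p) (h2 : p < q) (h3 : q ≤ S.length) :
    lcpInf (prevEnc (rotR (c :: S) p)) (prevEnc (rotR (c :: S) q))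
      = lcpInf (prevEnc (rotR S p)) (prevEnc (rotR S q)) :=
  lcpInf_cons_general d S hS c p q h1 h2 h3
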